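/- If x is an infinite 7/3-free binary word, then x = p·μ(y) for some p ∈ {ε, 0, 00, 1, 11} and some infinite 7/3-free binary word y, where μ is the Thue–Morse morphism. -/
import Mathlib


/-- An infinite binary word is 7/3-free if it contains no finite factor of
exponent ≥ 7/3. -/
def SevenThirdsFree (x : ℕ → Fin 2) : Prop :=
  ¬ ∃ i n p : ℕ, 1 ≤ p ∧ p ≤ n ∧ 3 * n ≥ 7 * p ∧
      ∀ j : ℕ, j + p < n → x (i + j) = x (i + j + p)

/-- The Thue–Morse morphism applied to an infinite binary word:
μ(0)=01, μ(1)=10. -/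
def muSeq (y : ℕ → Fin 2) : ℕ → Fin 2 :=
  fun n => if n % 2 = 0 then y (n / 2) else 1 - y (n / 2)

/-- A finite word prepended to an infinite word. -/
def prepend (p : List (Fin 2)) (z : ℕ → Fin 2) : ℕ → Fin 2 :=
  fun n => if n < p.length then p.getD n 0 else z (n - p.length)

lemma two_ne : ∀ u v : Fin 2, u ≠ v → v = 1 - u := by decide

lemma two_ne' : ∀ u v : Fin 2, u ≠ v → u = 1 - v := by decide

lemma two_sub_sub : ∀ u : Fin 2, 1 - (1 - u) = u := by decide

lemma fin2_cases : ∀ u : Fin 2, u = 0 ∨ u = 1 := by decide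

/-- in a 7/3-free word every window of length 4 contains a "double". -/
lemma exists_double (x : ℕ → Fin 2) (hx : SevenThirdsFree x) (j : ℕ) :
    ∃ t, j ≤ t ∧ t ≤ j + 3 ∧ x t = x (t + 1) := by
  by_contra h
  push_neg at h
  have h0 : x (j+1) = 1 - x j := two_ne _ _ (h j le_rfl (by omega))
  have h1 : x (j+1+1) = 1 - x (j+1) := two_ne _ _ (h (j+1) (by omega) (by omega))
  have h2 : x (j+2+1) = 1 - x (j+2) := two_ne _ _ (h (j+2) (by omega) (by omega))
  have h3 : x (j+3+1) = 1 - x (j+3) := two_ne _ _ (h (j+3) (by omega) (by omega))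
  rw [show j+1+1 = j+2 from rfl] at h1
  rw [show j+2+1 = j+3 from rfl] at h2
  rw [show j+3+1 = j+4 from rfl] at h3
  unfold SevenThirdsFree at hx
  apply hx
  refine ⟨j, 5, 2, by omega, by omega, by omega, ?_⟩
  intro t ht
  have ht3 : t < 3 := by omega
  interval_cases t
  · rw [h1, h0, two_sub_sub]; rfl
  · rw [h2, h1, two_sub_sub]
  · rw [h3, h2, two_sub_sub]

/-- two doubles at positions ≥ 1 cannot be an odd distance apart. -/
lemma no_odd_gap (x : ℕ → Fin 2) (hx : SevenThirdsFree x) :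
    ∀ d k, 1 ≤ k → x k = x (k+1) → x (k+d) = x (k+d+1) → d % 2 = 1 → False := by
  intro d
  induction d using Nat.strong_induction_on with
  | _ d IH =>
    intro k hk hD hD' hodd
    by_cases hbet : ∃ e, 0 < e ∧ e < d ∧ x (k+e) = x (k+e+1)
    · obtain ⟨e, he0, hed, hDe⟩ := hbet
      rcases Nat.even_or_odd e with ⟨r, hr⟩ | ⟨r, hr⟩
      · refine IH (d-e) (by omega) (k+e) (by omega) hDe ?_ (by omega)
        rw [show k+e+(d-e) = k+d from by omega]
        exact hD'
      · exact IH e (by omega) k hk hD hDe (by omega)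
    · push_neg at hbet
      unfold SevenThirdsFree at hx
      rcases show d = 1 ∨ d = 3 ∨ 5 ≤ d from by omega with rfl | h3
      · -- cube at k
        apply hx
        refine ⟨k, 3, 1, by omega, by omega, by omega, ?_⟩
        intro t ht
        have ht2 : t < 2 := by omega
        interval_cases t
        · exact hD
        · exact hD'
      rcases h3 with rfl | h5
      · -- d = 3, the baabaab case; k ≥ 1
        obtain ⟨k', rfl⟩ : ∃ k', k = k' + 1 := ⟨k - 1, by omega⟩
        have h1 : x (k'+1) = x (k'+1) := rfl
        have h2 : x (k'+2) = x (k'+1) := hD.symm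
        have hne1 : x (k'+2) ≠ x (k'+3) := by
          have := hbet 1 (by omega) (by omega); exact this
        have hne2 : x (k'+3) ≠ x (k'+4) := by
          have := hbet 2 (by omega) (by omega)
          rw [show k'+1+2 = k'+3 from rfl, show k'+3+1 = k'+4 from rfl] at this
          exact this
        have h3 : x (k'+3) = 1 - x (k'+1) := by
          rw [two_ne (x (k'+2)) (x (k'+3)) hne1, h2]
        have h4 : x (k'+4) = x (k'+1) := by
          rw [two_ne (x (k'+3)) (x (k'+4)) hne2, h3, two_sub_sub]
        have h5 : x (k'+5) = x (k'+1) := by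
          have := hD'
          rw [show k'+1+3 = k'+4 from rfl, show k'+4+1 = k'+5 from rfl] at this
          rw [← this, h4]
        have h0 : x k' = 1 - x (k'+1) := by
          by_cases hc : x k' = x (k'+1)
          · exfalso; apply hx
            refine ⟨k', 3, 1, by omega, by omega, by omega, ?_⟩
            intro t ht
            have ht2 : t < 2 := by omega
            interval_cases t
            · rw [show k' + 0 = k' from rfl, show k' + 0 + 1 = k' + 1 from rfl]
              exact hc
            · rw [show k' + 1 + 1 = k' + 2 from rfl, h2]
          · exact two_ne' _ _ hc
        have h6 : x (k'+6) = 1 - x (k'+1) := by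
          by_cases hc : x (k'+6) = x (k'+1)
          · exfalso; apply hx
            refine ⟨k'+4, 3, 1, by omega, by omega, by omega, ?_⟩
            intro t ht
            have ht2 : t < 2 := by omega
            interval_cases t
            · rw [show k'+4 + 0 = k'+4 from rfl, show k'+4+0+1 = k'+5 from rfl, h4, h5]
            · rw [show k'+4+1 = k'+5 from rfl, show k'+4+1+1 = k'+6 from rfl, h5, hc]
          · exact two_ne' _ _ hc
        -- (baa)^{7/3} at k'
        apply hx
        refine ⟨k', 7, 3, by omega, by omega, by omega, ?_⟩
        intro t ht
        have ht4 : t < 4 := by omega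
        interval_cases t
        · rw [show k' + 0 = k' from rfl, show k' + 0 + 3 = k' + 3 from rfl, h0, h3]
        · rw [show k' + 1 + 3 = k' + 4 from rfl, h4]
        · rw [show k' + 2 + 3 = k' + 5 from rfl, h2, h5]
        · rw [show k' + 3 + 3 = k' + 6 from rfl, h3, h6]
      · -- d ≥ 5 : alternation at k+1 .. k+5
        have hne1 : x (k+1) ≠ x (k+2) := hbet 1 (by omega) (by omega)
        have hne2 : x (k+2) ≠ x (k+3) := by
          have := hbet 2 (by omega) (by omega)
          rw [show k+2+1 = k+3 from rfl] at this; exact this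
        have hne3 : x (k+3) ≠ x (k+4) := by
          have := hbet 3 (by omega) (by omega)
          rw [show k+3+1 = k+4 from rfl] at this; exact this
        have hne4 : x (k+4) ≠ x (k+5) := by
          have := hbet 4 (by omega) (by omega)
          rw [show k+4+1 = k+5 from rfl] at this; exact this
        have g1 : x (k+2) = 1 - x (k+1) := two_ne _ _ hne1
        have g2 : x (k+3) = x (k+1) := by
          rw [two_ne _ _ hne2, g1, two_sub_sub]
        have g3 : x (k+4) = 1 - x (k+1) := by
          rw [two_ne _ _ hne3, g2]
        have g4 : x (k+5) = x (k+1) := by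
          rw [two_ne _ _ hne4, g3, two_sub_sub]
        apply hx
        refine ⟨k+1, 5, 2, by omega, by omega, by omega, ?_⟩
        intro t ht
        have ht3 : t < 3 := by omega
        interval_cases t
        · rw [show k+1+0 = k+1 from rfl, show k+1+0+2 = k+3 from rfl, g2]
        · rw [show k+1+1 = k+2 from rfl, show k+1+1+2 = k+4 from rfl, g1, g3]
        · rw [show k+1+2 = k+3 from rfl, show k+1+2+2 = k+5 from rfl, g2, g4]

/-- gluing lemma: if consecutive pairs after the prefix always differ, we get
the decomposition. -/
lemma glue (x : ℕ → Fin 2) (hx : SevenThirdsFree x) (p : List (Fin 2))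
    (hget : ∀ i, i < p.length → p.getD i 0 = x i)
    (hpair : ∀ n, x (p.length + 2*n) ≠ x (p.length + 2*n + 1)) :
    ∃ y : ℕ → Fin 2, SevenThirdsFree y ∧ x = prepend p (muSeq y) := by
  refine ⟨fun n => x (p.length + 2*n), ?_, ?_⟩
  · -- 7/3-freeness of the half word
    unfold SevenThirdsFree
    rintro ⟨i, n, q, hq1, hqn, hexp, hper⟩
    unfold SevenThirdsFree at hx
    apply hx
    refine ⟨p.length + 2*i, 2*n, 2*q, by omega, by omega, by omega, ?_⟩
    intro j hj
    rcases Nat.even_or_odd j with ⟨j', rfl⟩ | ⟨j', rfl⟩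
    · have heven : x (p.length + 2*(i+j')) = x (p.length + 2*(i+j'+q)) :=
        hper j' (by omega)
      rw [show p.length+2*i+(j'+j')+2*q = p.length+2*(i+j'+q) from by omega,
        show p.length+2*i+(j'+j') = p.length+2*(i+j') from by omega]
      exact heven
    · have heven : x (p.length + 2*(i+j')) = x (p.length + 2*(i+j'+q)) :=
        hper j' (by omega)
      rw [show p.length+2*i+(2*j'+1)+2*q = p.length+2*(i+j'+q)+1 from by omega,
        show p.length+2*i+(2*j'+1) = p.length+2*(i+j')+1 from by omega,
        two_ne _ _ (hpair (i+j')), two_ne _ _ (hpair (i+j'+q)), heven]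
  · funext n
    unfold prepend muSeq
    by_cases hn : n < p.length
    · rw [if_pos hn]
      exact (hget n hn).symm
    · rw [if_neg hn]
      push_neg at hn
      by_cases h2 : (n - p.length) % 2 = 0
      · rw [if_pos h2]
        have hmn : p.length + 2*((n - p.length)/2) = n := by omega
        show x n = x (p.length + 2*((n - p.length)/2))
        rw [hmn]
      · rw [if_neg h2]
        have key : x (p.length + 2*((n - p.length)/2) + 1)
            = 1 - x (p.length + 2*((n - p.length)/2)) :=
          two_ne _ _ (hpair ((n - p.length)/2))
        have hm : p.length + 2*((n - p.length)/2) + 1 = n := by omega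
        rw [hm] at key
        exact key

/-- Structure theorem: every infinite 7/3-free binary word is `p · μ(y)` with
`p ∈ {ε, 0, 00, 1, 11}` and `y` infinite 7/3-free. -/
theorem seventhirds_free_structure (x : ℕ → Fin 2) (hx : SevenThirdsFree x) :
    ∃ p ∈ ({[], [0], [0, 0], [1], [1, 1]} : Set (List (Fin 2))),
      ∃ y : ℕ → Fin 2, SevenThirdsFree y ∧ x = prepend p (muSeq y) := by
  obtain ⟨k1, hk11, hk14, hDk1⟩ := exists_double x hx 1
  rcases Nat.even_or_odd k1 with ⟨r, hr⟩ | ⟨r, hr⟩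
  · -- k1 even (and ≥ 2): no doubles at odd positions; prefix of length 1
    have hO : ∀ n, x (1 + 2*n) ≠ x (1 + 2*n + 1) := by
      intro n hD
      rcases Nat.lt_trichotomy (1 + 2*n) k1 with h | h | h
      · refine no_odd_gap x hx (k1 - (1+2*n)) (1+2*n) (by omega) hD ?_ (by omega)
        rw [show 1+2*n+(k1-(1+2*n)) = k1 from by omega]
        exact hDk1
      · omega
      · refine no_odd_gap x hx ((1+2*n) - k1) k1 (by omega) hDk1 ?_ (by omega)
        rw [show k1+((1+2*n)-k1) = 1+2*n from by omega]
        exact hD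
    rcases fin2_cases (x 0) with h0 | h0
    · refine ⟨[0], by simp, ?_⟩
      apply glue x hx
      · intro i hi
        have hi0 : i = 0 := by simp at hi; omega
        subst hi0
        simpa using h0.symm
      · simpa using hO
    · refine ⟨[1], by simp, ?_⟩
      apply glue x hx
      · intro i hi
        have hi0 : i = 0 := by simp at hi; omega
        subst hi0
        simpa using h0.symm
      · simpa using hO
  · -- k1 odd: no doubles at even positions ≥ 2
    have hE : ∀ n, 1 ≤ n → x (2*n) ≠ x (2*n + 1) := by
      intro n hn hD
      rcases Nat.lt_trichotomy (2*n) k1 with h | h | h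
      · refine no_odd_gap x hx (k1 - 2*n) (2*n) (by omega) hD ?_ (by omega)
        rw [show 2*n+(k1-2*n) = k1 from by omega]
        exact hDk1
      · omega
      · refine no_odd_gap x hx (2*n - k1) k1 (by omega) hDk1 ?_ (by omega)
        rw [show k1+(2*n-k1) = 2*n from by omega]
        exact hD
    by_cases h01 : x 0 = x 1
    · -- prefix of length 2
      have hpair : ∀ n, x (2 + 2*n) ≠ x (2 + 2*n + 1) := by
        intro n
        have := hE (n+1) (by omega)
        rw [show 2*(n+1) = 2+2*n from by omega] at this
        exact this
      rcases fin2_cases (x 0) with h0 | h0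
      · refine ⟨[0, 0], by simp, ?_⟩
        apply glue x hx
        · intro i hi
          simp at hi
          have hi2 : i = 0 ∨ i = 1 := by omega
          rcases hi2 with rfl | rfl
          · simpa using h0.symm
          · have : x 1 = 0 := by rw [← h01]; exact h0
            simpa using this.symm
        · simpa using hpair
      · refine ⟨[1, 1], by simp, ?_⟩
        apply glue x hx
        · intro i hi
          simp at hi
          have hi2 : i = 0 ∨ i = 1 := by omega
          rcases hi2 with rfl | rfl
          · simpa using h0.symm
          · have : x 1 = 1 := by rw [← h01]; exact h0
            simpa using this.symm
        · simpa using hpair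
    · -- empty prefix
      refine ⟨[], by simp, ?_⟩
      apply glue x hx
      · intro i hi
        simp at hi
      · intro n
        simp only [List.length_nil, Nat.zero_add]
        rcases Nat.eq_zero_or_pos n with rfl | hn
        · simpa using h01
        · exact hE n hn
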